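/- For f \in \dot H^1(\mathbb{R}^4) and g \in L^2(\mathbb{R}^4), the map \lambda \mapsto \mathcal{E}_Z(\lambda f, \lambda^2 g) is differentiable on (0,\infty) with derivative \frac{d}{d\lambda}\mathcal{E}_Z(\lambda f, \lambda^2 g) = \lambda^{-1}\mathcal{K}(\lambda f) + \lambda^3\|g + |f|^2\|_{L^2}^2. -/

import Mathlib

open MeasureTheory

noncomputable section

abbrev R4 := EuclideanSpace ℝ (Fin 4)

/-- The homogeneous Sobolev norm `‖f‖_{Ḣ¹} = (∫ |∇f|²)^{1/2}`. -/
def H1norm (f : R4 → ℂ) : ℝ := Real.sqrt (∫ x : R4, ‖fderiv ℝ f x‖ ^ 2)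

/-- The `L²` norm of a real-valued function. -/
def L2norm (g : R4 → ℝ) : ℝ := Real.sqrt (∫ x : R4, g x ^ 2)

/-- The `L⁴` norm `(∫ |f|⁴)^{1/4}`. -/
def L4norm (f : R4 → ℂ) : ℝ := (∫ x : R4, ‖f x‖ ^ 4) ^ ((4 : ℝ)⁻¹)

/-- The Zakharov energy `E_Z(f,g) = ∫ ½|∇f|² + ¼|g|² + ½ Re(g)|f|²` (`g` real-valued). -/
def EZ (f : R4 → ℂ) (g : R4 → ℝ) : ℝ :=
  ∫ x : R4, ((1 / 2) * ‖fderiv ℝ f x‖ ^ 2 + (1 / 4) * g x ^ 2 + (1 / 2) * g x * ‖f x‖ ^ 2)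

/-- The functional K(f) = ‖f‖_{Ḣ¹}² - ‖f‖_{L⁴}⁴. -/
def Kfun (f : R4 → ℂ) : ℝ := H1norm f ^ 2 - L4norm f ^ 4

/-
Every term of the energy is homogeneous under `(f, g) ↦ (λf, λ²g)`: the kinetic term has degree 2
and the wave and coupling terms degree 4, so `E_Z(λf, λ²g) = λ² a + λ⁴ b` is a polynomial in `λ`,
and likewise `K(λf) = λ² ‖∇f‖² − λ⁴ ‖f‖⁴`. Differentiating and expanding
`∫ (g + |f|²)² = ‖g‖² + 2 ∫ g |f|² + ‖f‖⁴` matches the two sides.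
-/

lemma norm_fderiv_ofReal_mul {E : Type*} [NormedAddCommGroup E] [NormedSpace ℝ E]
    (f : E → ℂ) (t : ℝ) (x : E) :
    ‖fderiv ℝ (fun x => (t : ℂ) * f x) x‖ = |t| * ‖fderiv ℝ f x‖ := by
  have hsmul : (fun x => (t : ℂ) * f x) = t • f := funext fun y => (Complex.real_smul ..).symm
  rw [hsmul, fderiv_const_smul_field, Pi.smul_apply, norm_smul, Real.norm_eq_abs]

lemma H1norm_sq (f : R4 → ℂ) : H1norm f ^ 2 = ∫ x : R4, ‖fderiv ℝ f x‖ ^ 2 :=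
  Real.sq_sqrt (integral_nonneg fun _ => by positivity)

lemma L4norm_pow_four (f : R4 → ℂ) : L4norm f ^ 4 = ∫ x : R4, ‖f x‖ ^ 4 := by
  rw [L4norm, ← Real.rpow_natCast, ← Real.rpow_mul (integral_nonneg fun _ => by positivity)]
  norm_num

lemma Kfun_ofReal_mul (f : R4 → ℂ) (t : ℝ) :
    Kfun (fun x => (t : ℂ) * f x)
      = t ^ 2 * (∫ x : R4, ‖fderiv ℝ f x‖ ^ 2) - t ^ 4 * ∫ x : R4, ‖f x‖ ^ 4 := by
  simp only [Kfun, H1norm_sq, L4norm_pow_four, norm_fderiv_ofReal_mul, norm_mul,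
    Complex.norm_real, Real.norm_eq_abs, mul_pow, sq_abs, (by decide : Even 4).pow_abs,
    integral_const_mul]

lemma EZ_ofReal_mul_sq_mul (f : R4 → ℂ) (g : R4 → ℝ)
    (hf1 : Integrable (fun x : R4 => ‖fderiv ℝ f x‖ ^ 2))
    (hg2 : Integrable (fun x : R4 => g x ^ 2))
    (hfg : Integrable (fun x : R4 => g x * ‖f x‖ ^ 2)) (t : ℝ) :
    EZ (fun x => (t : ℂ) * f x) (fun x => t ^ 2 * g x)
      = t ^ 2 * ((1 / 2) * ∫ x : R4, ‖fderiv ℝ f x‖ ^ 2)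
        + t ^ 4 * ((1 / 4) * (∫ x : R4, g x ^ 2) + (1 / 2) * ∫ x : R4, g x * ‖f x‖ ^ 2) := by
  have hpoint : ∀ x, (1 / 2) * ‖fderiv ℝ (fun x => (t : ℂ) * f x) x‖ ^ 2
      + (1 / 4) * (t ^ 2 * g x) ^ 2 + (1 / 2) * (t ^ 2 * g x) * ‖(t : ℂ) * f x‖ ^ 2
      = (t ^ 2 * (1 / 2)) * ‖fderiv ℝ f x‖ ^ 2
        + ((t ^ 4 * (1 / 4)) * g x ^ 2 + (t ^ 4 * (1 / 2)) * (g x * ‖f x‖ ^ 2)) := by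
    intro x
    rw [norm_fderiv_ofReal_mul, norm_mul, Complex.norm_real, Real.norm_eq_abs]
    simp only [mul_pow, sq_abs]
    ring
  simp only [EZ, hpoint]
  have hB : Integrable fun x : R4 => t ^ 4 * (1 / 4) * g x ^ 2 := hg2.const_mul _
  have hC : Integrable fun x : R4 => t ^ 4 * (1 / 2) * (g x * ‖f x‖ ^ 2) := hfg.const_mul _
  have hBC : Integrable fun x : R4 =>
      t ^ 4 * (1 / 4) * g x ^ 2 + t ^ 4 * (1 / 2) * (g x * ‖f x‖ ^ 2) := hB.add hC
  rw [integral_add (hf1.const_mul _) hBC, integral_add hB hC]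
  simp only [integral_const_mul]
  ring

lemma integral_add_norm_sq_sq (f : R4 → ℂ) (g : R4 → ℝ)
    (hf4 : Integrable (fun x : R4 => ‖f x‖ ^ 4))
    (hg2 : Integrable (fun x : R4 => g x ^ 2))
    (hfg : Integrable (fun x : R4 => g x * ‖f x‖ ^ 2)) :
    ∫ x : R4, (g x + ‖f x‖ ^ 2) ^ 2
      = (∫ x : R4, g x ^ 2) + 2 * (∫ x : R4, g x * ‖f x‖ ^ 2) + ∫ x : R4, ‖f x‖ ^ 4 := by
  have hpoint : ∀ x : R4, (g x + ‖f x‖ ^ 2) ^ 2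
      = g x ^ 2 + 2 * (g x * ‖f x‖ ^ 2) + ‖f x‖ ^ 4 := fun x => by ring
  simp only [hpoint]
  have hC : Integrable fun x : R4 => 2 * (g x * ‖f x‖ ^ 2) := hfg.const_mul 2
  have hBC : Integrable fun x : R4 => g x ^ 2 + 2 * (g x * ‖f x‖ ^ 2) := hg2.add hC
  rw [integral_add hBC hf4, integral_add hg2 hC, integral_const_mul]

/-- The map λ ↦ E_Z(λf, λ²g) is differentiable on (0,∞) with derivative
λ⁻¹ K(λf) + λ³ ‖g + |f|²‖_{L²}². -/
theorem energy_scaling_derivative (f : R4 → ℂ) (g : R4 → ℝ)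
    (hf1 : Integrable (fun x : R4 => ‖fderiv ℝ f x‖ ^ 2))
    (hf4 : Integrable (fun x : R4 => ‖f x‖ ^ 4))
    (hg2 : Integrable (fun x : R4 => g x ^ 2))
    (hfg : Integrable (fun x : R4 => g x * ‖f x‖ ^ 2)) :
    ∀ l : ℝ, 0 < l →
      HasDerivAt (fun t : ℝ => EZ (fun x => (t : ℂ) * f x) (fun x => t ^ 2 * g x))
        (l⁻¹ * Kfun (fun x => (l : ℂ) * f x) + l ^ 3 * ∫ x : R4, (g x + ‖f x‖ ^ 2) ^ 2)
        l := by
  intro l hl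
  simp only [EZ_ofReal_mul_sq_mul f g hf1 hg2 hfg, Kfun_ofReal_mul,
    integral_add_norm_sq_sq f g hf4 hg2 hfg]
  refine (((hasDerivAt_pow 2 l).mul_const _).add
    ((hasDerivAt_pow 4 l).mul_const _)).congr_deriv ?_
  field_simp
  ring
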